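/- For the spherical pendulum with Hamiltonian E(x,v) = ½⟨v,v⟩ + x_3 on TS^2, the isoenergetic surface Q^3 = {E = ½} is diffeomorphic to the 3-sphere S^3, while for any α > 1 the isoenergetic surface Q^3 = {E = α} is diffeomorphic to the unit tangent bundle T_1S^2 = {(x,ξ) : x ∈ S^2, ‖ξ‖ = 1}, hence to the real projective space ℝP^3. -/

import Mathlib

open scoped RealInnerProductSpace

noncomputable section

/-- The phase space of the spherical pendulum: the tangent bundle `TS²` of the unit
sphere `S² ⊆ ℝ³`, realized concretely as
`TS² = {(x,v) ∈ ℝ³ × ℝ³ : ‖x‖ = 1, ⟪x,v⟫ = 0}`. -/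
def TS2 : Set (EuclideanSpace ℝ (Fin 3) × EuclideanSpace ℝ (Fin 3)) :=
  {p | ‖p.1‖ = 1 ∧ ⟪p.1, p.2⟫ = 0}

/-- The energy function `E(x,v) = ½⟨v,v⟩ + x₃` of the spherical pendulum. -/
def pendulumEnergy (p : EuclideanSpace ℝ (Fin 3) × EuclideanSpace ℝ (Fin 3)) : ℝ :=
  (1 / 2) * ⟪p.2, p.2⟫ + p.1 2

/-- The isoenergetic surface `Q³ = {E = h} ⊆ TS²`. -/
def isoenergeticSurface (h : ℝ) :
    Set (EuclideanSpace ℝ (Fin 3) × EuclideanSpace ℝ (Fin 3)) :=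
  {p ∈ TS2 | pendulumEnergy p = h}

/-- The unit tangent bundle `T₁S² = {(x,ξ) : x ∈ S², ξ ∈ T_xS², ‖ξ‖ = 1}`. -/
def T1S2 : Set (EuclideanSpace ℝ (Fin 3) × EuclideanSpace ℝ (Fin 3)) :=
  {p | ‖p.1‖ = 1 ∧ ‖p.2‖ = 1 ∧ ⟪p.1, p.2⟫ = 0}

/-- Two subsets of Euclidean spaces are diffeomorphic (as submanifolds): there are
smooth maps of the ambient spaces carrying one onto the other, mutually inverse on
them.  (For closed submanifolds of Euclidean space this is the usual notion of
diffeomorphism, every smooth map on a submanifold being the restriction of a smooth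
ambient map.) -/
def SubmanifoldDiffeo {E F : Type*} [NormedAddCommGroup E] [NormedSpace ℝ E]
    [NormedAddCommGroup F] [NormedSpace ℝ F] (S : Set E) (T : Set F) : Prop :=
  ∃ f : E → F, ∃ g : F → E,
    ContDiff ℝ (⊤ : ℕ∞) f ∧ ContDiff ℝ (⊤ : ℕ∞) g ∧ Set.MapsTo f S T ∧ Set.MapsTo g T S ∧
    (∀ x ∈ S, g (f x) = x) ∧ (∀ y ∈ T, f (g y) = y)

/-- The antipodal identification on the unit sphere `S³ ⊆ ℝ⁴`; its quotient is the
real projective space `ℝP³`. -/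
def antipodalSetoid :
    Setoid (Metric.sphere (0 : EuclideanSpace ℝ (Fin 4)) 1) where
  r x y := x.1 = y.1 ∨ x.1 = -y.1
  iseqv := by
    constructor
    · intro x; exact Or.inl rfl
    · intro x y hxy
      rcases hxy with h | h
      · exact Or.inl h.symm
      · right; rw [h]; simp
    · intro x y z hxy hyz
      rcases hxy with h | h <;> rcases hyz with h' | h'
      · exact Or.inl (h.trans h')
      · exact Or.inr (h.trans h')
      · right; rw [h, h']
      · left; rw [h, h']; simp

/-- `ℝP³`, realized as the quotient of `S³` by the antipodal identification. -/
def RP3 : Type := Quotient antipodalSetoid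

instance : TopologicalSpace RP3 := instTopologicalSpaceQuotient

open scoped RealInnerProductSpace

noncomputable section
namespace SP

abbrev E3 := EuclideanSpace ℝ (Fin 3)

lemma contDiff_sqrt_comp {E : Type*} [NormedAddCommGroup E] [NormedSpace ℝ E] {Q : E → ℝ}
    (hQ : ContDiff ℝ (⊤ : ℕ∞) Q) (hpos : ∀ x, 0 < Q x) :
    ContDiff ℝ (⊤ : ℕ∞) (fun x => Real.sqrt (Q x)) := by
  rw [contDiff_iff_contDiffAt]
  intro x
  exact (Real.contDiffAt_sqrt (hpos x).ne').comp x hQ.contDiffAt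

lemma contDiff_inv_sqrt_comp {E : Type*} [NormedAddCommGroup E] [NormedSpace ℝ E] {Q : E → ℝ}
    (hQ : ContDiff ℝ (⊤ : ℕ∞) Q) (hpos : ∀ x, 0 < Q x) :
    ContDiff ℝ (⊤ : ℕ∞) (fun x => (Real.sqrt (Q x))⁻¹) := by
  rw [contDiff_iff_contDiffAt]
  intro x
  exact ContDiffAt.inv
    (((Real.contDiffAt_sqrt (hpos x).ne').comp x hQ.contDiffAt))
    (Real.sqrt_ne_zero'.2 (hpos x))

lemma inner3 (x y : E3) : ⟪x, y⟫ = x 0 * y 0 + x 1 * y 1 + x 2 * y 2 := by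
  simp [PiLp.inner_apply, RCLike.inner_apply, Fin.sum_univ_three, mul_comm]

lemma coordsq (x : E3) : (x 2)^2 ≤ ⟪x, x⟫ := by
  rw [inner3]
  nlinarith [sq_nonneg (x 0), sq_nonneg (x 1), sq_nonneg (x 2)]

lemma contDiff_coord (i : Fin 3) :
    ContDiff ℝ (⊤ : ℕ∞) (fun p : E3 × E3 => p.1 i) :=
  (EuclideanSpace.proj i : E3 →L[ℝ] ℝ).contDiff.comp contDiff_fst

def Qf (α : ℝ) (p : E3 × E3) : ℝ :=
  ⟪p.2, p.2⟫ + ((⟪p.1, p.1⟫ - 1)^2 + ((1/2) * ⟪p.2, p.2⟫ + p.1 2 - α)^2)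

def Qg (α : ℝ) (p : E3 × E3) : ℝ :=
  2*(α - p.1 2) + (α-1)⁻¹ * (⟪p.1, p.1⟫ - 1)^2 + (⟪p.2, p.2⟫ - 1)^2

lemma Qf_contDiff (α : ℝ) : ContDiff ℝ (⊤ : ℕ∞) (Qf α) := by
  unfold Qf
  have h1 : ContDiff ℝ (⊤ : ℕ∞) (fun p : E3 × E3 => ⟪p.2, p.2⟫) :=
    ContDiff.inner ℝ contDiff_snd contDiff_snd
  have h2 : ContDiff ℝ (⊤ : ℕ∞) (fun p : E3 × E3 => ⟪p.1, p.1⟫) :=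
    ContDiff.inner ℝ contDiff_fst contDiff_fst
  have h3 := contDiff_coord 2
  fun_prop

lemma Qg_contDiff (α : ℝ) : ContDiff ℝ (⊤ : ℕ∞) (Qg α) := by
  unfold Qg
  have h1 : ContDiff ℝ (⊤ : ℕ∞) (fun p : E3 × E3 => ⟪p.2, p.2⟫) :=
    ContDiff.inner ℝ contDiff_snd contDiff_snd
  have h2 : ContDiff ℝ (⊤ : ℕ∞) (fun p : E3 × E3 => ⟪p.1, p.1⟫) :=
    ContDiff.inner ℝ contDiff_fst contDiff_fst
  have h3 := contDiff_coord 2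
  fun_prop

lemma Qf_pos {α : ℝ} (hα : 1 < α) (p : E3 × E3) : 0 < Qf α p := by
  have hB : 0 ≤ ⟪p.2, p.2⟫ := real_inner_self_nonneg
  have hx : (p.1 2)^2 ≤ ⟪p.1, p.1⟫ := coordsq p.1
  unfold Qf
  set A := ⟪p.1, p.1⟫
  set B := ⟪p.2, p.2⟫
  set X := p.1 2
  by_contra hcon
  push_neg at hcon
  have s1 : (0:ℝ) ≤ (A - 1)^2 := sq_nonneg _
  have s2 : (0:ℝ) ≤ ((1/2) * B + X - α)^2 := sq_nonneg _
  have hB0 : B = 0 := by nlinarith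
  have hA1 : (A - 1)^2 = 0 := by nlinarith
  have hXα : ((1/2) * B + X - α)^2 = 0 := by nlinarith
  have hA1' : A = 1 := by
    have := sq_eq_zero_iff.1 hA1
    linarith [sub_eq_zero.1 this]
  have hX' : X = α := by
    have := sq_eq_zero_iff.1 hXα
    rw [hB0] at this
    linarith [this]
  rw [hA1', hX'] at hx
  nlinarith

lemma Qg_pos {α : ℝ} (hα : 1 < α) (p : E3 × E3) : 0 < Qg α p := by
  have hB : 0 ≤ ⟪p.2, p.2⟫ := real_inner_self_nonneg
  have hx : (p.1 2)^2 ≤ ⟪p.1, p.1⟫ := coordsq p.1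
  have hβ : (0:ℝ) < α - 1 := by linarith
  unfold Qg
  set A := ⟪p.1, p.1⟫ with hA
  set X := p.1 2 with hX
  have h2 : 2*X ≤ A + 1 := by nlinarith [sq_nonneg (X - 1)]
  have key : 0 < 2*(α - X) + (α-1)⁻¹ * (A - 1)^2 := by
    have expand : (α - 1) * (2*(α - X) + (α-1)⁻¹ * (A - 1)^2)
        = (α-1) * (2*(α - X)) + (A-1)^2 := by
      field_simp
    by_contra hc
    push_neg at hc
    have h3 : (α - 1) * (2*(α - X) + (α-1)⁻¹ * (A - 1)^2) ≤ 0 :=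
      mul_nonpos_of_nonneg_of_nonpos hβ.le hc
    rw [expand] at h3
    nlinarith [sq_nonneg (2*(A-1) - (α-1)), sq_nonneg (A-1)]
  nlinarith [sq_nonneg (⟪p.2,p.2⟫ - 1)]

end SP

namespace SP
open Real

variable {α : ℝ}

def fiso (α : ℝ) (p : E3 × E3) : E3 × E3 := (p.1, (Real.sqrt (Qf α p))⁻¹ • p.2)
def giso (α : ℝ) (p : E3 × E3) : E3 × E3 := (p.1, Real.sqrt (Qg α p) • p.2)

lemma fiso_contDiff (hα : 1 < α) : ContDiff ℝ (⊤ : ℕ∞) (fiso α) :=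
  contDiff_fst.prodMk
    ((contDiff_inv_sqrt_comp (Qf_contDiff α) (Qf_pos hα)).smul contDiff_snd)

lemma giso_contDiff (hα : 1 < α) : ContDiff ℝ (⊤ : ℕ∞) (giso α) :=
  contDiff_fst.prodMk
    ((contDiff_sqrt_comp (Qg_contDiff α) (Qg_pos hα)).smul contDiff_snd)

lemma mem_iso {p : E3 × E3} :
    p ∈ isoenergeticSurface α ↔
      (‖p.1‖ = 1 ∧ ⟪p.1, p.2⟫ = 0) ∧ (1/2) * ⟪p.2, p.2⟫ + p.1 2 = α := Iff.rfl

lemma mem_T1S2 {p : E3 × E3} :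
    p ∈ T1S2 ↔ ‖p.1‖ = 1 ∧ ‖p.2‖ = 1 ∧ ⟪p.1, p.2⟫ = 0 := Iff.rfl

lemma inner_self_one {x : E3} (h : ‖x‖ = 1) : ⟪x, x⟫ = 1 := by
  rw [real_inner_self_eq_norm_sq, h]; norm_num

lemma x3_le_one {x : E3} (h : ‖x‖ = 1) : x 2 ≤ 1 := by
  have := coordsq x
  rw [inner_self_one h] at this
  nlinarith

lemma Qf_on_iso {p : E3 × E3} (hp : p ∈ isoenergeticSurface α) :
    Qf α p = ⟪p.2, p.2⟫ := by
  obtain ⟨⟨hx, ho⟩, hE⟩ := mem_iso.1 hp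
  unfold Qf
  rw [inner_self_one hx, hE]
  ring

lemma inner_on_iso {p : E3 × E3} (hp : p ∈ isoenergeticSurface α) :
    ⟪p.2, p.2⟫ = 2 * (α - p.1 2) := by
  obtain ⟨⟨hx, ho⟩, hE⟩ := mem_iso.1 hp
  linarith

lemma inner_pos_on_iso (hα : 1 < α) {p : E3 × E3} (hp : p ∈ isoenergeticSurface α) :
    0 < ⟪p.2, p.2⟫ := by
  rw [inner_on_iso hp]
  have := x3_le_one (mem_iso.1 hp).1.1
  linarith

lemma Qg_on_T1S2 {p : E3 × E3} (hp : p ∈ T1S2) :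
    Qg α p = 2 * (α - p.1 2) := by
  obtain ⟨hx, hξ, ho⟩ := hp
  unfold Qg
  rw [inner_self_one hx, inner_self_one hξ]
  ring

lemma Qg_on_T1S2_pos (hα : 1 < α) {p : E3 × E3} (hp : p ∈ T1S2) :
    0 < 2 * (α - p.1 2) := by
  have := x3_le_one hp.1
  linarith

lemma fiso_mapsTo (hα : 1 < α) :
    Set.MapsTo (fiso α) (isoenergeticSurface α) T1S2 := by
  intro p hp
  obtain ⟨⟨hx, ho⟩, hE⟩ := mem_iso.1 hp
  have hB : 0 < ⟪p.2, p.2⟫ := inner_pos_on_iso hα hp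
  have hQ : Qf α p = ⟪p.2, p.2⟫ := Qf_on_iso hp
  have hv : ‖p.2‖ = Real.sqrt ⟪p.2, p.2⟫ := by
    rw [real_inner_self_eq_norm_sq, Real.sqrt_sq (norm_nonneg _)]
  have hs : (0:ℝ) < Real.sqrt ⟪p.2, p.2⟫ := Real.sqrt_pos.2 hB
  refine ⟨hx, ?_, ?_⟩
  · show ‖(Real.sqrt (Qf α p))⁻¹ • p.2‖ = 1
    rw [norm_smul, hQ, Real.norm_eq_abs, abs_of_nonneg (inv_nonneg.2 (Real.sqrt_nonneg _)),
      hv, inv_mul_cancel₀ hs.ne']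
  · show ⟪p.1, (Real.sqrt (Qf α p))⁻¹ • p.2⟫ = 0
    rw [real_inner_smul_right, ho, mul_zero]

lemma giso_mapsTo (hα : 1 < α) :
    Set.MapsTo (giso α) T1S2 (isoenergeticSurface α) := by
  intro p hp
  obtain ⟨hx, hξ, ho⟩ := hp
  have hQ : Qg α p = 2 * (α - p.1 2) := Qg_on_T1S2 ⟨hx, hξ, ho⟩
  have hpos : 0 < Qg α p := by rw [hQ]; exact Qg_on_T1S2_pos hα ⟨hx, hξ, ho⟩
  refine ⟨⟨hx, ?_⟩, ?_⟩
  · show ⟪p.1, Real.sqrt (Qg α p) • p.2⟫ = 0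
    rw [real_inner_smul_right, ho, mul_zero]
  · show (1/2) * ⟪Real.sqrt (Qg α p) • p.2, Real.sqrt (Qg α p) • p.2⟫ + p.1 2 = α
    rw [real_inner_smul_right, real_inner_smul_left, inner_self_one hξ,
      mul_one, Real.mul_self_sqrt hpos.le, hQ]
    ring

lemma fiso_giso (hα : 1 < α) {p : E3 × E3} (hp : p ∈ isoenergeticSurface α) :
    giso α (fiso α p) = p := by
  obtain ⟨⟨hx, ho⟩, hE⟩ := mem_iso.1 hp
  have hB : 0 < ⟪p.2, p.2⟫ := inner_pos_on_iso hα hp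
  have hQ : Qf α p = ⟪p.2, p.2⟫ := Qf_on_iso hp
  have hs : (0:ℝ) < Real.sqrt (Qf α p) := Real.sqrt_pos.2 (by rw [hQ]; exact hB)
  have hinner : ⟪(Real.sqrt (Qf α p))⁻¹ • p.2, (Real.sqrt (Qf α p))⁻¹ • p.2⟫ = 1 := by
    rw [real_inner_smul_right, real_inner_smul_left, ← mul_assoc, ← mul_inv]
    rw [Real.mul_self_sqrt (by rw [hQ]; exact hB.le), hQ]
    exact inv_mul_cancel₀ hB.ne'
  have hQg : Qg α (fiso α p) = Qf α p := by
    show Qg α (p.1, (Real.sqrt (Qf α p))⁻¹ • p.2) = Qf α p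
    unfold Qg
    simp only
    rw [hinner, inner_self_one hx, hQ, inner_on_iso hp]
    ring
  show (p.1, Real.sqrt (Qg α (fiso α p)) • (Real.sqrt (Qf α p))⁻¹ • p.2) = p
  rw [hQg, smul_smul, mul_inv_cancel₀ hs.ne', one_smul]

lemma giso_fiso (hα : 1 < α) {p : E3 × E3} (hp : p ∈ T1S2) :
    fiso α (giso α p) = p := by
  obtain ⟨hx, hξ, ho⟩ := hp
  have hQ : Qg α p = 2 * (α - p.1 2) := Qg_on_T1S2 ⟨hx, hξ, ho⟩
  have hpos : 0 < Qg α p := by rw [hQ]; exact Qg_on_T1S2_pos hα ⟨hx, hξ, ho⟩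
  have hs : (0:ℝ) < Real.sqrt (Qg α p) := Real.sqrt_pos.2 hpos
  have hinner : ⟪Real.sqrt (Qg α p) • p.2, Real.sqrt (Qg α p) • p.2⟫ = Qg α p := by
    rw [real_inner_smul_right, real_inner_smul_left, inner_self_one hξ, mul_one,
      Real.mul_self_sqrt hpos.le]
  have hQf : Qf α (giso α p) = Qg α p := by
    show Qf α (p.1, Real.sqrt (Qg α p) • p.2) = Qg α p
    unfold Qf
    simp only
    rw [hinner, inner_self_one hx, hQ]
    ring
  show (p.1, (Real.sqrt (Qf α (giso α p)))⁻¹ • Real.sqrt (Qg α p) • p.2) = p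
  rw [hQf, smul_smul, inv_mul_cancel₀ hs.ne', one_smul]

theorem part2_diffeo (hα : 1 < α) :
    SubmanifoldDiffeo (isoenergeticSurface α) T1S2 :=
  ⟨fiso α, giso α, fiso_contDiff hα, giso_contDiff hα, fiso_mapsTo hα, giso_mapsTo hα,
    fun _ hp => fiso_giso hα hp, fun _ hp => giso_fiso hα hp⟩

end SP

namespace SP
open Quaternion

abbrev E4 := EuclideanSpace ℝ (Fin 4)

def qi : ℍ[ℝ] := ⟨0,1,0,0⟩
def qj : ℍ[ℝ] := ⟨0,0,1,0⟩

@[simp] lemma qi_re' : qi.re = 0 := rfl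
@[simp] lemma qi_imI' : qi.imI = 1 := rfl
@[simp] lemma qi_imJ' : qi.imJ = 0 := rfl
@[simp] lemma qi_imK' : qi.imK = 0 := rfl
@[simp] lemma qj_re' : qj.re = 0 := rfl
@[simp] lemma qj_imI' : qj.imI = 0 := rfl
@[simp] lemma qj_imJ' : qj.imJ = 1 := rfl
@[simp] lemma qj_imK' : qj.imK = 0 := rfl

def quat (q : E4) : ℍ[ℝ] := Quaternion.linearIsometryEquivTuple.symm q

def vpart (X : ℍ[ℝ]) : E3 :=
  (EuclideanSpace.equiv (Fin 3) ℝ).symm ![X.imI, X.imJ, X.imK]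

def Phi (q : E4) : E3 × E3 :=
  (vpart (quat q * qi * star (quat q)), vpart (quat q * qj * star (quat q)))

lemma vpart0 (X : ℍ[ℝ]) : vpart X 0 = X.imI := rfl
lemma vpart1 (X : ℍ[ℝ]) : vpart X 1 = X.imJ := rfl
lemma vpart2 (X : ℍ[ℝ]) : vpart X 2 = X.imK := rfl

lemma continuous_quat : Continuous quat :=
  Quaternion.linearIsometryEquivTuple.symm.continuous

lemma continuous_vpart : Continuous vpart := by
  refine (EuclideanSpace.equiv (Fin 3) ℝ).symm.continuous.comp (continuous_pi ?_)
  intro i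
  fin_cases i <;> simp <;>
    first
    | exact Quaternion.continuous_imI
    | exact Quaternion.continuous_imJ
    | exact Quaternion.continuous_imK

lemma continuous_Phi : Continuous Phi := by
  unfold Phi
  have h : Continuous (fun q : E4 => quat q) := continuous_quat
  have hs : Continuous (fun q : E4 => star (quat q)) := continuous_star.comp h
  exact (continuous_vpart.comp (((h.mul continuous_const).mul hs))).prodMk
    (continuous_vpart.comp (((h.mul continuous_const).mul hs)))

lemma re_mul_comm (p q : ℍ[ℝ]) : (p*q).re = (q*p).re := by
  simp only [Quaternion.re_mul]; ring

lemma norm_quat (q : E4) : ‖quat q‖ = ‖q‖ :=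
  Quaternion.linearIsometryEquivTuple.symm.norm_map q

lemma normSq_quat (q : E4) (h : ‖q‖ = 1) : normSq (quat q) = 1 := by
  rw [Quaternion.normSq_eq_norm_mul_self, norm_quat, h]
  norm_num

lemma norm_of_normSq {q : E4} (h : normSq (quat q) = 1) : ‖q‖ = 1 := by
  have h2 := Quaternion.normSq_eq_norm_mul_self (quat q)
  rw [norm_quat] at h2
  nlinarith [norm_nonneg q]

lemma star_mul_one {Q : ℍ[ℝ]} (h : normSq Q = 1) : star Q * Q = 1 := by
  rw [star_mul_self, h]; norm_num

lemma mul_star_one {Q : ℍ[ℝ]} (h : normSq Q = 1) : Q * star Q = 1 := by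
  rw [self_mul_star, h]; norm_num

lemma conj_re_zero {Q u : ℍ[ℝ]} (h : normSq Q = 1) (hu : u.re = 0) :
    (Q * u * star Q).re = 0 := by
  rw [re_mul_comm, ← mul_assoc, star_mul_one h, one_mul, hu]

lemma conj_normSq {Q u : ℍ[ℝ]} (h : normSq Q = 1) :
    normSq (Q * u * star Q) = normSq u := by
  rw [map_mul, map_mul, Quaternion.normSq_star, h]
  ring

lemma conj_mul {Q u v : ℍ[ℝ]} (h : normSq Q = 1) :
    (Q * u * star Q) * (Q * v * star Q) = Q * (u * v) * star Q := by
  have h1 : star Q * Q = 1 := star_mul_one h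
  calc (Q * u * star Q) * (Q * v * star Q)
      = Q * (u * ((star Q * Q) * (v * star Q))) := by simp only [mul_assoc]
    _ = Q * (u * v) * star Q := by rw [h1, one_mul]; simp only [mul_assoc]

lemma pure_star {X : ℍ[ℝ]} (h : X.re = 0) : star X = -X := by
  ext <;> simp [h]

lemma pure_sq {X : ℍ[ℝ]} (h : X.re = 0) (hn : normSq X = 1) : X * X = -1 := by
  have h1 : X * star X = ((normSq X : ℝ) : ℍ[ℝ]) := self_mul_star X
  rw [pure_star h, hn, mul_neg] at h1
  calc X * X = -(-(X * X)) := (neg_neg _).symm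
    _ = -1 := by rw [h1]; norm_num

lemma normSq_smul (r : ℝ) (a : ℍ[ℝ]) : normSq (r • a) = r^2 * normSq a := by
  simp only [Quaternion.normSq_def', Quaternion.re_smul, Quaternion.imI_smul,
    Quaternion.imJ_smul, Quaternion.imK_smul, smul_eq_mul]
  ring

lemma normalize_conj {X U : ℍ[ℝ]} (hX : X.re = 0) (hU : U.re = 0)
    (hnX : normSq X = 1) (hnU : normSq U = 1)
    (hpos : 0 < normSq (1 - X*U)) :
    ∃ c : ℝ, 0 < c ∧ normSq (c • (1 - X*U)) = 1 ∧
      (c • (1 - X*U)) * U * star (c • (1 - X*U)) = X := by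
  set m : ℍ[ℝ] := 1 - X*U with hm
  have hXX : X * X = -1 := pure_sq hX hnX
  have hUU : U * U = -1 := pure_sq hU hnU
  have key : m * U = X * m := by
    rw [hm, sub_mul, one_mul, mul_assoc, hUU, mul_neg_one, sub_neg_eq_add,
      mul_sub, mul_one, ← mul_assoc, hXX, neg_one_mul, sub_neg_eq_add, add_comm]
  refine ⟨(Real.sqrt (normSq m))⁻¹, inv_pos.2 (Real.sqrt_pos.2 hpos), ?_, ?_⟩
  · rw [normSq_smul, ← Real.sqrt_inv, Real.sq_sqrt (inv_nonneg.2 (le_of_lt hpos))]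
    exact inv_mul_cancel₀ hpos.ne'
  · set c : ℝ := (Real.sqrt (normSq m))⁻¹ with hc
    have hc2 : c^2 * normSq m = 1 := by
      rw [hc, ← Real.sqrt_inv, Real.sq_sqrt (inv_nonneg.2 hpos.le)]
      exact inv_mul_cancel₀ hpos.ne'
    rw [Quaternion.star_smul, smul_mul_assoc, smul_mul_assoc, mul_smul_comm, smul_smul,
      key, mul_assoc, self_mul_star, Quaternion.mul_coe_eq_smul, smul_smul, ← sq, hc2,
      one_smul]

lemma comm_qi {P : ℍ[ℝ]} (hJ : P.imJ = 0) (hK : P.imK = 0) : P * qi = qi * P := by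
  ext <;> simp [Quaternion.re_mul, Quaternion.imI_mul, Quaternion.imJ_mul,
    Quaternion.imK_mul, hJ, hK]

lemma stepA {X : ℍ[ℝ]} (hX : X.re = 0) (hnX : normSq X = 1) :
    ∃ a : ℍ[ℝ], normSq a = 1 ∧ a * qi * star a = X := by
  by_cases h : X = -qi
  · refine ⟨qj, ?_, ?_⟩
    · simp [Quaternion.normSq_def']
    · rw [h]
      ext <;> simp [Quaternion.re_mul, Quaternion.imI_mul, Quaternion.imJ_mul,
        Quaternion.imK_mul]
  · have hqi_re : (qi : ℍ[ℝ]).re = 0 := rfl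
    have hqi_n : normSq (qi : ℍ[ℝ]) = 1 := by simp [Quaternion.normSq_def']
    have hXqi : X * qi = ⟨-X.imI, X.re, X.imK, -X.imJ⟩ := by
      ext <;> simp [Quaternion.re_mul, Quaternion.imI_mul, Quaternion.imJ_mul,
        Quaternion.imK_mul]
    have hm : (1 - X * qi : ℍ[ℝ]) = ⟨1 + X.imI, -X.re, -X.imK, X.imJ⟩ := by
      ext <;> simp [Quaternion.re_mul, Quaternion.imI_mul, Quaternion.imJ_mul,
        Quaternion.imK_mul]
    have hnormm : normSq (1 - X * qi : ℍ[ℝ]) = 2 + 2 * X.imI := by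
      rw [hm, Quaternion.normSq_def' (⟨1 + X.imI, -X.re, -X.imK, X.imJ⟩ : ℍ[ℝ])]
      have hd := Quaternion.normSq_def' X
      rw [hnX] at hd
      show (1 + X.imI)^2 + (-X.re)^2 + (-X.imK)^2 + (X.imJ)^2 = 2 + 2 * X.imI
      nlinarith [hd, hX]
    have hpos : 0 < normSq (1 - X * qi : ℍ[ℝ]) := by
      rw [hnormm]
      by_contra hc
      push_neg at hc
      have h1 : X.imI ≤ -1 := by linarith
      have hdef := Quaternion.normSq_def' X
      rw [hnX, hX] at hdef
      have h2 : X.imI = -1 := by nlinarith [sq_nonneg X.imJ, sq_nonneg X.imK]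
      have h3 : X.imJ = 0 := by nlinarith [sq_nonneg X.imJ, sq_nonneg X.imK]
      have h4 : X.imK = 0 := by nlinarith [sq_nonneg X.imJ, sq_nonneg X.imK]
      exact h (by ext <;> simp [hX, h2, h3, h4])
    obtain ⟨c, hc, hn1, hconj⟩ := normalize_conj hX hqi_re hnX hqi_n hpos
    exact ⟨c • (1 - X * qi), hn1, hconj⟩

lemma stepB {X : ℍ[ℝ]} (hX : X.re = 0) (hXi : X.imI = 0) (hnX : normSq X = 1) :
    ∃ b : ℍ[ℝ], normSq b = 1 ∧ b * qj * star b = X ∧ b * qi = qi * b := by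
  by_cases h : X = -qj
  · refine ⟨qi, ?_, ?_, rfl⟩
    · simp [Quaternion.normSq_def']
    · rw [h]
      ext <;> simp [Quaternion.re_mul, Quaternion.imI_mul, Quaternion.imJ_mul,
        Quaternion.imK_mul]
  · have hqj_re : (qj : ℍ[ℝ]).re = 0 := rfl
    have hqj_n : normSq (qj : ℍ[ℝ]) = 1 := by simp [Quaternion.normSq_def']
    have hXqj : X * qj = ⟨-X.imJ, -X.imK, X.re, X.imI⟩ := by
      ext <;> simp [Quaternion.re_mul, Quaternion.imI_mul, Quaternion.imJ_mul,
        Quaternion.imK_mul] <;> ring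
    have hm : (1 - X * qj : ℍ[ℝ]) = ⟨1 + X.imJ, X.imK, -X.re, -X.imI⟩ := by
      ext <;> simp [Quaternion.re_mul, Quaternion.imI_mul, Quaternion.imJ_mul,
        Quaternion.imK_mul] <;> ring
    have hnormm : normSq (1 - X * qj : ℍ[ℝ]) = 2 + 2 * X.imJ := by
      rw [hm, Quaternion.normSq_def' (⟨1 + X.imJ, X.imK, -X.re, -X.imI⟩ : ℍ[ℝ])]
      have hd := Quaternion.normSq_def' X
      rw [hnX] at hd
      show (1 + X.imJ)^2 + (X.imK)^2 + (-X.re)^2 + (-X.imI)^2 = 2 + 2 * X.imJ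
      nlinarith [hd, hX, hXi]
    have hpos : 0 < normSq (1 - X * qj : ℍ[ℝ]) := by
      rw [hnormm]
      by_contra hc
      push_neg at hc
      have hdef := Quaternion.normSq_def' X
      rw [hnX, hX, hXi] at hdef
      have h2 : X.imJ = -1 := by nlinarith [sq_nonneg X.imK]
      have h4 : X.imK = 0 := by nlinarith [sq_nonneg X.imK]
      exact h (by ext <;> simp [hX, hXi, h2, h4])
    obtain ⟨c, hc, hn1, hconj⟩ := normalize_conj hX hqj_re hnX hqj_n hpos
    refine ⟨c • (1 - X * qj), hn1, hconj, ?_⟩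
    have hcomm : (1 - X * qj : ℍ[ℝ]) * qi = qi * (1 - X * qj) := by
      apply comm_qi <;> rw [hm] <;> simp [hX, hXi]
    rw [smul_mul_assoc, mul_smul_comm, hcomm]

end SP

namespace SP
open Quaternion

lemma qi_re : (qi : ℍ[ℝ]).re = 0 := rfl
lemma qj_re : (qj : ℍ[ℝ]).re = 0 := rfl
lemma qi_normSq : normSq (qi : ℍ[ℝ]) = 1 := by simp [Quaternion.normSq_def']
lemma qj_normSq : normSq (qj : ℍ[ℝ]) = 1 := by simp [Quaternion.normSq_def']

lemma exists_conj {X Ξ : ℍ[ℝ]} (hX : X.re = 0) (hΞ : Ξ.re = 0) (hnX : normSq X = 1)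
    (hnΞ : normSq Ξ = 1) (horth : (X * Ξ).re = 0) :
    ∃ Q : ℍ[ℝ], normSq Q = 1 ∧ Q * qi * star Q = X ∧ Q * qj * star Q = Ξ := by
  obtain ⟨a, hna, hai⟩ := stepA hX hnX
  have ha1 : a * star a = 1 := mul_star_one hna
  have ha1' : star a * a = 1 := star_mul_one hna
  set Ξ' : ℍ[ℝ] := star a * Ξ * a with hΞ'
  have hΞ're : Ξ'.re = 0 := by
    rw [hΞ', re_mul_comm, ← mul_assoc, ha1, one_mul, hΞ]
  have hnΞ' : normSq Ξ' = 1 := by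
    rw [hΞ', map_mul, map_mul, Quaternion.normSq_star, hna, hnΞ]; ring
  have haiX : a * qi = X * a := by
    have h := congrArg (· * a) hai
    simp only [mul_assoc, ha1', mul_one] at h
    exact h
  have himI : Ξ'.imI = 0 := by
    have h1 : (Ξ' * qi).re = -Ξ'.imI := by simp [Quaternion.re_mul]
    have h2 : Ξ' * qi = star a * ((Ξ * X) * a) := by
      rw [hΞ']
      calc star a * Ξ * a * qi = star a * (Ξ * (a * qi)) := by simp only [mul_assoc]
        _ = star a * (Ξ * (X * a)) := by rw [haiX]
        _ = star a * ((Ξ * X) * a) := by simp only [mul_assoc]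
    have h3 : (Ξ' * qi).re = 0 := by
      rw [h2, re_mul_comm, mul_assoc, ha1, mul_one, re_mul_comm, horth]
    rw [h3] at h1
    linarith
  obtain ⟨b, hnb, hbj, hbi⟩ := stepB hΞ're himI hnΞ'
  have hb1 : b * star b = 1 := mul_star_one hnb
  refine ⟨a * b, ?_, ?_, ?_⟩
  · rw [map_mul, hna, hnb]; ring
  · have hbqi : b * qi * star b = qi := by rw [hbi, mul_assoc, hb1, mul_one]
    rw [star_mul]
    calc a * b * qi * (star b * star a) = a * ((b * qi * star b) * star a) := by
          simp only [mul_assoc]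
      _ = a * (qi * star a) := by rw [hbqi]
      _ = X := by rw [← mul_assoc]; exact hai
  · rw [star_mul]
    calc a * b * qj * (star b * star a) = a * ((b * qj * star b) * star a) := by
          simp only [mul_assoc]
      _ = a * (Ξ' * star a) := by rw [hbj]
      _ = Ξ := by
          rw [hΞ']
          have : a * (star a * Ξ * a * star a) = (a * star a) * Ξ * (a * star a) := by
            simp only [mul_assoc]
          rw [this, ha1, one_mul, mul_one]

lemma inner_self3 (x : E3) : ⟪x, x⟫ = x 0^2 + x 1^2 + x 2^2 := by
  rw [inner3]; ring

lemma sumsq3 {x : E3} (h : ‖x‖ = 1) : x 0^2 + x 1^2 + x 2^2 = 1 := by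
  rw [← inner_self3]; exact inner_self_one h

lemma norm_vpart {X : ℍ[ℝ]} (hre : X.re = 0) (hn : normSq X = 1) : ‖vpart X‖ = 1 := by
  have hd := Quaternion.normSq_def' X
  rw [hn, hre] at hd
  rw [EuclideanSpace.norm_eq, Real.sqrt_eq_one]
  rw [Fin.sum_univ_three]
  rw [vpart0, vpart1, vpart2]
  simp only [Real.norm_eq_abs, sq_abs]
  nlinarith [hd]

lemma Phi_mem {q : E4} (hq : ‖q‖ = 1) : Phi q ∈ T1S2 := by
  have hn := normSq_quat q hq
  have hXre : (quat q * qi * star (quat q)).re = 0 := conj_re_zero hn qi_re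
  have hΞre : (quat q * qj * star (quat q)).re = 0 := conj_re_zero hn qj_re
  have hXn : normSq (quat q * qi * star (quat q)) = 1 := by
    rw [conj_normSq hn, qi_normSq]
  have hΞn : normSq (quat q * qj * star (quat q)) = 1 := by
    rw [conj_normSq hn, qj_normSq]
  have hqiqj : (qi * qj : ℍ[ℝ]) = ⟨0,0,0,1⟩ := by
    ext <;> simp [Quaternion.re_mul, Quaternion.imI_mul, Quaternion.imJ_mul,
      Quaternion.imK_mul]
  have horth : ((quat q * qi * star (quat q)) * (quat q * qj * star (quat q))).re = 0 := by
    rw [conj_mul hn, hqiqj]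
    exact conj_re_zero hn rfl
  refine ⟨norm_vpart hXre hXn, norm_vpart hΞre hΞn, ?_⟩
  show ⟪vpart _, vpart _⟫ = 0
  rw [inner3, vpart0, vpart1, vpart2, vpart0, vpart1, vpart2]
  have hmul := Quaternion.re_mul (quat q * qi * star (quat q)) (quat q * qj * star (quat q))
  rw [horth, hXre, hΞre] at hmul
  linarith

lemma Phi_neg (q : E4) : Phi (-q) = Phi q := by
  have hq : quat (-q) = -quat q := by
    unfold quat; exact map_neg _ q
  unfold Phi
  rw [hq, star_neg]
  simp only [neg_mul, mul_neg, neg_neg]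

lemma vpart_inj {X Y : ℍ[ℝ]} (hX : X.re = 0) (hY : Y.re = 0) (h : vpart X = vpart Y) :
    X = Y := by
  ext
  · rw [hX, hY]
  · rw [← vpart0 X, ← vpart0 Y, h]
  · rw [← vpart1 X, ← vpart1 Y, h]
  · rw [← vpart2 X, ← vpart2 Y, h]

lemma conj_eq_comm {Q Q' u : ℍ[ℝ]} (hQ : normSq Q = 1) (hQ' : normSq Q' = 1)
    (h : Q * u * star Q = Q' * u * star Q') :
    (star Q' * Q) * u = u * (star Q' * Q) := by
  have h1 : star Q * Q = 1 := star_mul_one hQ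
  have h2 : star Q' * Q' = 1 := star_mul_one hQ'
  have e := congrArg (fun z => star Q' * z * Q) h
  calc (star Q' * Q) * u = star Q' * (Q * u * star Q) * Q := by
        simp only [mul_assoc, h1, mul_one]
    _ = star Q' * (Q' * u * star Q') * Q := e
    _ = u * (star Q' * Q) := by
        simp only [← mul_assoc]
        rw [h2, one_mul]

lemma Phi_inj {q q' : E4} (h1 : ‖q‖ = 1) (h2 : ‖q'‖ = 1) (h : Phi q = Phi q') :
    q = q' ∨ q = -q' := by
  have hn : normSq (quat q) = 1 := normSq_quat q h1
  have hn' : normSq (quat q') = 1 := normSq_quat q' h2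
  have hXre : (quat q * qi * star (quat q)).re = 0 := conj_re_zero hn qi_re
  have hX're : (quat q' * qi * star (quat q')).re = 0 := conj_re_zero hn' qi_re
  have hΞre : (quat q * qj * star (quat q)).re = 0 := conj_re_zero hn qj_re
  have hΞ're : (quat q' * qj * star (quat q')).re = 0 := conj_re_zero hn' qj_re
  have hX : quat q * qi * star (quat q) = quat q' * qi * star (quat q') :=
    vpart_inj hXre hX're (congrArg Prod.fst h)
  have hΞ : quat q * qj * star (quat q) = quat q' * qj * star (quat q') :=
    vpart_inj hΞre hΞ're (congrArg Prod.snd h)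
  set p : ℍ[ℝ] := star (quat q') * quat q with hp
  have hpi := conj_eq_comm hn hn' hX
  have hpj := conj_eq_comm hn hn' hΞ
  rw [← hp] at hpi hpj
  have hK : p.imK = 0 := by
    have := congrArg QuaternionAlgebra.imJ hpi
    simp [Quaternion.imJ_mul] at this
    linarith
  have hJ : p.imJ = 0 := by
    have := congrArg QuaternionAlgebra.imK hpi
    simp [Quaternion.imK_mul] at this
    linarith
  have hI : p.imI = 0 := by
    have := congrArg QuaternionAlgebra.imK hpj
    simp [Quaternion.imK_mul] at this
    linarith
  have hnp : normSq p = 1 := by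
    rw [hp, map_mul, Quaternion.normSq_star, hn, hn']; ring
  have hre2 : p.re^2 = 1 := by
    have := Quaternion.normSq_def' p
    rw [hnp, hI, hJ, hK] at this
    nlinarith [this]
  have hQQ' : quat q = quat q' * p := by
    rw [hp, ← mul_assoc, mul_star_one hn', one_mul]
  have hcase : p.re = 1 ∨ p.re = -1 := by
    have : (p.re - 1) * (p.re + 1) = 0 := by nlinarith [hre2]
    rcases mul_eq_zero.1 this with h | h
    · left; linarith
    · right; linarith
  rcases hcase with hr | hr
  · left
    have hp1 : p = 1 := by ext <;> simp [hr, hI, hJ, hK]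
    rw [hp1, mul_one] at hQQ'
    exact Quaternion.linearIsometryEquivTuple.symm.injective hQQ'
  · right
    have hp1 : p = -1 := by ext <;> simp [hr, hI, hJ, hK]
    rw [hp1] at hQQ'
    have : quat q = quat (-q') := by
      rw [hQQ', mul_neg_one]
      unfold quat
      rw [map_neg]
    exact Quaternion.linearIsometryEquivTuple.symm.injective this

lemma Phi_surj {xp : E3 × E3} (h : xp ∈ T1S2) : ∃ q : E4, ‖q‖ = 1 ∧ Phi q = xp := by
  obtain ⟨hx, hξ, ho⟩ := h
  set X : ℍ[ℝ] := ⟨0, xp.1 0, xp.1 1, xp.1 2⟩ with hXdef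
  set Ξ : ℍ[ℝ] := ⟨0, xp.2 0, xp.2 1, xp.2 2⟩ with hΞdef
  have hXre : X.re = 0 := rfl
  have hΞre : Ξ.re = 0 := rfl
  have hnX : normSq X = 1 := by
    rw [Quaternion.normSq_def' X]
    show 0^2 + (xp.1 0)^2 + (xp.1 1)^2 + (xp.1 2)^2 = 1
    have := sumsq3 hx
    linarith
  have hnΞ : normSq Ξ = 1 := by
    rw [Quaternion.normSq_def' Ξ]
    show 0^2 + (xp.2 0)^2 + (xp.2 1)^2 + (xp.2 2)^2 = 1
    have := sumsq3 hξ
    linarith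
  have horth : (X * Ξ).re = 0 := by
    have hio := ho
    rw [inner3] at hio
    rw [Quaternion.re_mul]
    show 0 * 0 - xp.1 0 * xp.2 0 - xp.1 1 * xp.2 1 - xp.1 2 * xp.2 2 = 0
    linarith
  obtain ⟨Q, hnQ, hQi, hQj⟩ := exists_conj hXre hΞre hnX hnΞ horth
  refine ⟨Quaternion.linearIsometryEquivTuple Q, ?_, ?_⟩
  · rw [Quaternion.linearIsometryEquivTuple.norm_map]
    have := Quaternion.normSq_eq_norm_mul_self Q
    rw [hnQ] at this
    nlinarith [norm_nonneg Q]
  · have hq : quat (Quaternion.linearIsometryEquivTuple Q) = Q :=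
      Quaternion.linearIsometryEquivTuple.symm_apply_apply Q
    unfold Phi
    rw [hq, hQi, hQj]
    refine Prod.ext ?_ ?_
    · ext i
      fin_cases i <;> rfl
    · ext i
      fin_cases i <;> rfl

end SP

namespace SP

def PhiS : (Metric.sphere (0 : E4) 1) → T1S2 := fun q =>
  ⟨Phi q.1, Phi_mem (by simpa using mem_sphere_zero_iff_norm.1 q.2)⟩

lemma continuous_PhiS : Continuous PhiS :=
  Continuous.subtype_mk (continuous_Phi.comp continuous_subtype_val) _

lemma PhiS_resp (a b : Metric.sphere (0 : E4) 1) (h : antipodalSetoid.r a b) :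
    PhiS a = PhiS b := by
  apply Subtype.ext
  show Phi a.1 = Phi b.1
  rcases h with h | h
  · rw [h]
  · rw [h, Phi_neg]

def RP3toT1S2 : RP3 → T1S2 :=
  Quotient.lift PhiS PhiS_resp

lemma RP3toT1S2_bij : Function.Bijective RP3toT1S2 := by
  constructor
  · intro a b
    refine Quotient.inductionOn₂ a b ?_
    intro qa qb hEq
    apply Quotient.sound
    have h : Phi qa.1 = Phi qb.1 := Subtype.ext_iff.1 hEq
    have h1 : ‖qa.1‖ = 1 := by simpa using mem_sphere_zero_iff_norm.1 qa.2
    have h2 : ‖qb.1‖ = 1 := by simpa using mem_sphere_zero_iff_norm.1 qb.2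
    exact Phi_inj h1 h2 h
  · intro t
    obtain ⟨q, hq, hPhi⟩ := Phi_surj t.2
    refine ⟨Quotient.mk _ ⟨q, by simpa [mem_sphere_zero_iff_norm] using hq⟩, ?_⟩
    exact Subtype.ext hPhi

noncomputable def RP3homeoT1S2 : RP3 ≃ₜ T1S2 := by
  haveI : CompactSpace RP3 := Quotient.compactSpace
  exact Continuous.homeoOfEquivCompactToT2
    (f := Equiv.ofBijective RP3toT1S2 RP3toT1S2_bij)
    (Continuous.quotient_lift continuous_PhiS PhiS_resp)

noncomputable def isoHomeoT1S2 {α : ℝ} (hα : 1 < α) :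
    (isoenergeticSurface α) ≃ₜ T1S2 where
  toFun := (fiso_mapsTo hα).restrict _ _ _
  invFun := (giso_mapsTo hα).restrict _ _ _
  left_inv := fun p => Subtype.ext (fiso_giso hα p.2)
  right_inv := fun p => Subtype.ext (giso_fiso hα p.2)
  continuous_toFun := Continuous.restrict (fiso_mapsTo hα) (fiso_contDiff hα).continuous
  continuous_invFun := Continuous.restrict (giso_mapsTo hα) (giso_contDiff hα).continuous

noncomputable def isoHomeoRP3 {α : ℝ} (hα : 1 < α) :
    (isoenergeticSurface α) ≃ₜ RP3 :=
  (isoHomeoT1S2 hα).trans RP3homeoT1S2.symm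

end SP

namespace SP

/-! ### Part 1: the energy level 1/2 is diffeomorphic to S³ -/

def Tf (p : E3 × E3) : ℝ := (1 + ⟪p.2, p.2⟫)/2

def Fmap (p : E3 × E3) : E4 :=
  WithLp.toLp 2 ![ Real.sqrt 2 * (Real.sqrt 3)⁻¹ * (Real.sqrt (Tf p))⁻¹ * p.1 0,
     Real.sqrt 2 * (Real.sqrt 3)⁻¹ * (Real.sqrt (Tf p))⁻¹ * p.1 1,
     (Real.sqrt 3)⁻¹ * (p.2 0 + p.1 0 * p.2 2 * (Tf p)⁻¹),
     (Real.sqrt 3)⁻¹ * (p.2 1 + p.1 1 * p.2 2 * (Tf p)⁻¹) ]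

def Tg (w : E4) : ℝ := 2 - (3/2)*((w 0)^2 + (w 1)^2) + 2*(⟪w, w⟫ - 1)^2

def ug (w : E4) : ℝ := w 2 * w 0 + w 3 * w 1

def Gmap (w : E4) : E3 × E3 :=
  (WithLp.toLp 2 ![ Real.sqrt 3 * (Real.sqrt 2)⁻¹ * Real.sqrt (Tg w) * w 0,
      Real.sqrt 3 * (Real.sqrt 2)⁻¹ * Real.sqrt (Tg w) * w 1,
      (3/2)*((w 0)^2 + (w 1)^2) - 1 ],
   WithLp.toLp 2 ![ Real.sqrt 3 * (w 2 - (3/2) * w 0 * ug w),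
      Real.sqrt 3 * (w 3 - (3/2) * w 1 * ug w),
      3 * (Real.sqrt 2)⁻¹ * Real.sqrt (Tg w) * ug w ])

lemma Fmap0 (p : E3 × E3) :
    Fmap p 0 = Real.sqrt 2 * (Real.sqrt 3)⁻¹ * (Real.sqrt (Tf p))⁻¹ * p.1 0 := rfl
lemma Fmap1 (p : E3 × E3) :
    Fmap p 1 = Real.sqrt 2 * (Real.sqrt 3)⁻¹ * (Real.sqrt (Tf p))⁻¹ * p.1 1 := rfl
lemma Fmap2 (p : E3 × E3) :
    Fmap p 2 = (Real.sqrt 3)⁻¹ * (p.2 0 + p.1 0 * p.2 2 * (Tf p)⁻¹) := rfl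
lemma Fmap3 (p : E3 × E3) :
    Fmap p 3 = (Real.sqrt 3)⁻¹ * (p.2 1 + p.1 1 * p.2 2 * (Tf p)⁻¹) := rfl

lemma Gmap10 (w : E4) :
    (Gmap w).1 0 = Real.sqrt 3 * (Real.sqrt 2)⁻¹ * Real.sqrt (Tg w) * w 0 := rfl
lemma Gmap11 (w : E4) :
    (Gmap w).1 1 = Real.sqrt 3 * (Real.sqrt 2)⁻¹ * Real.sqrt (Tg w) * w 1 := rfl
lemma Gmap12 (w : E4) :
    (Gmap w).1 2 = (3/2)*((w 0)^2 + (w 1)^2) - 1 := rfl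
lemma Gmap20 (w : E4) :
    (Gmap w).2 0 = Real.sqrt 3 * (w 2 - (3/2) * w 0 * ug w) := rfl
lemma Gmap21 (w : E4) :
    (Gmap w).2 1 = Real.sqrt 3 * (w 3 - (3/2) * w 1 * ug w) := rfl
lemma Gmap22 (w : E4) :
    (Gmap w).2 2 = 3 * (Real.sqrt 2)⁻¹ * Real.sqrt (Tg w) * ug w := rfl

lemma Tf_pos (p : E3 × E3) : 0 < Tf p := by
  have : (0:ℝ) ≤ ⟪p.2, p.2⟫ := real_inner_self_nonneg
  unfold Tf
  linarith

lemma inner4 (x y : E4) :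
    ⟪x, y⟫ = x 0 * y 0 + x 1 * y 1 + x 2 * y 2 + x 3 * y 3 := by
  simp [PiLp.inner_apply, RCLike.inner_apply, Fin.sum_univ_four, mul_comm]

lemma Tg_pos (w : E4) : 0 < Tg w := by
  unfold Tg
  have h01 : (w 0)^2 + (w 1)^2 ≤ ⟪w, w⟫ := by
    rw [inner4]
    nlinarith [sq_nonneg (w 2), sq_nonneg (w 3)]
  set U := ⟪w, w⟫
  have hU : 0 ≤ U := real_inner_self_nonneg
  nlinarith [sq_nonneg (4*U - 11/2), sq_nonneg (U - 1)]

lemma contDiff_coord4 (i : Fin 4) : ContDiff ℝ (⊤ : ℕ∞) (fun w : E4 => w i) :=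
  (EuclideanSpace.proj i : E4 →L[ℝ] ℝ).contDiff

lemma Tf_contDiff : ContDiff ℝ (⊤ : ℕ∞) Tf := by
  unfold Tf
  exact (contDiff_const.add (ContDiff.inner ℝ contDiff_snd contDiff_snd)).div_const 2

lemma Tg_contDiff : ContDiff ℝ (⊤ : ℕ∞) Tg := by
  unfold Tg
  have h1 : ContDiff ℝ (⊤ : ℕ∞) (fun w : E4 => ⟪w, w⟫) :=
    ContDiff.inner ℝ contDiff_id contDiff_id
  exact (contDiff_const.sub (contDiff_const.mul
      (((contDiff_coord4 0).pow 2).add ((contDiff_coord4 1).pow 2)))).add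
    (contDiff_const.mul ((h1.sub contDiff_const).pow 2))

lemma ug_contDiff : ContDiff ℝ (⊤ : ℕ∞) ug := by
  unfold ug
  exact ((contDiff_coord4 2).mul (contDiff_coord4 0)).add
    ((contDiff_coord4 3).mul (contDiff_coord4 1))

lemma Fmap_contDiff : ContDiff ℝ (⊤ : ℕ∞) Fmap := by
  have hS : ContDiff ℝ (⊤ : ℕ∞) (fun p => (Real.sqrt (Tf p))⁻¹) :=
    contDiff_inv_sqrt_comp Tf_contDiff Tf_pos
  have hT : ContDiff ℝ (⊤ : ℕ∞) (fun p => (Tf p)⁻¹) :=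
    Tf_contDiff.inv (fun p => (Tf_pos p).ne')
  have hx0 := contDiff_coord 0
  have hx1 := contDiff_coord 1
  have hv0 : ContDiff ℝ (⊤ : ℕ∞) (fun p : E3 × E3 => p.2 0) :=
    (EuclideanSpace.proj (0:Fin 3) : E3 →L[ℝ] ℝ).contDiff.comp contDiff_snd
  have hv1 : ContDiff ℝ (⊤ : ℕ∞) (fun p : E3 × E3 => p.2 1) :=
    (EuclideanSpace.proj (1:Fin 3) : E3 →L[ℝ] ℝ).contDiff.comp contDiff_snd
  have hv2 : ContDiff ℝ (⊤ : ℕ∞) (fun p : E3 × E3 => p.2 2) :=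
    (EuclideanSpace.proj (2:Fin 3) : E3 →L[ℝ] ℝ).contDiff.comp contDiff_snd
  rw [contDiff_euclidean]
  intro i
  fin_cases i
  · exact (contDiff_const.mul hS).mul hx0
  · exact (contDiff_const.mul hS).mul hx1
  · exact contDiff_const.mul (hv0.add ((hx0.mul hv2).mul hT))
  · exact contDiff_const.mul (hv1.add ((hx1.mul hv2).mul hT))

lemma Gmap_contDiff : ContDiff ℝ (⊤ : ℕ∞) Gmap := by
  have hS : ContDiff ℝ (⊤ : ℕ∞) (fun w => Real.sqrt (Tg w)) :=
    contDiff_sqrt_comp Tg_contDiff Tg_pos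
  have h0 := contDiff_coord4 0
  have h1 := contDiff_coord4 1
  have h2 := contDiff_coord4 2
  have h3 := contDiff_coord4 3
  have hu := ug_contDiff
  apply ContDiff.prodMk
  · rw [contDiff_euclidean]
    intro i
    fin_cases i
    · exact (contDiff_const.mul hS).mul h0
    · exact (contDiff_const.mul hS).mul h1
    · exact (contDiff_const.mul ((h0.pow 2).add (h1.pow 2))).sub contDiff_const
  · rw [contDiff_euclidean]
    intro i
    fin_cases i
    · exact contDiff_const.mul (h2.sub ((contDiff_const.mul h0).mul hu))
    · exact contDiff_const.mul (h3.sub ((contDiff_const.mul h1).mul hu))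
    · exact (contDiff_const.mul hS).mul hu

end SP

namespace SP

lemma norm3_of {x : E3} (h : (x 0)^2 + (x 1)^2 + (x 2)^2 = 1) : ‖x‖ = 1 := by
  rw [EuclideanSpace.norm_eq, Real.sqrt_eq_one, Fin.sum_univ_three]
  simpa [Real.norm_eq_abs, sq_abs] using h

lemma norm4_of {w : E4} (h : (w 0)^2 + (w 1)^2 + (w 2)^2 + (w 3)^2 = 1) : ‖w‖ = 1 := by
  rw [EuclideanSpace.norm_eq, Real.sqrt_eq_one, Fin.sum_univ_four]
  simpa [Real.norm_eq_abs, sq_abs] using h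

lemma sumsq4 {w : E4} (h : ‖w‖ = 1) : (w 0)^2 + (w 1)^2 + (w 2)^2 + (w 3)^2 = 1 := by
  have h2 : ⟪w, w⟫ = 1 := by
    rw [real_inner_self_eq_norm_sq, h]; norm_num
  rw [inner4] at h2
  linear_combination h2

variable {p : E3 × E3}

-- basic constraint extraction
lemma sig_I1 (hp : p ∈ isoenergeticSurface (1/2 : ℝ)) : (p.1 0)^2 + (p.1 1)^2 + (p.1 2)^2 = 1 := by
  obtain ⟨⟨hx, _⟩, _⟩ := mem_iso.1 hp
  exact sumsq3 hx

lemma sig_I2 (hp : p ∈ isoenergeticSurface (1/2 : ℝ)) : p.1 0 * p.2 0 + p.1 1 * p.2 1 + p.1 2 * p.2 2 = 0 := by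
  obtain ⟨⟨_, ho⟩, _⟩ := mem_iso.1 hp
  rw [inner3] at ho
  exact ho

lemma sig_I3 (hp : p ∈ isoenergeticSurface (1/2 : ℝ)) : (p.2 0)^2 + (p.2 1)^2 + (p.2 2)^2 = 1 - 2 * p.1 2 := by
  obtain ⟨⟨_, _⟩, hE⟩ := mem_iso.1 hp
  rw [inner_self3] at hE
  linarith

lemma sig_ht (hp : p ∈ isoenergeticSurface (1/2 : ℝ)) : Tf p = 1 - p.1 2 := by
  unfold Tf
  rw [inner_self3]
  have := sig_I3 hp
  linarith

lemma sig_tpos (hp : p ∈ isoenergeticSurface (1/2 : ℝ)) : 0 < 1 - p.1 2 := by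
  rw [← sig_ht hp]; exact Tf_pos p

lemma sig_hS2 (hp : p ∈ isoenergeticSurface (1/2 : ℝ)) : (Real.sqrt (Tf p))^2 = 1 - p.1 2 := by
  rw [Real.sq_sqrt (Tf_pos p).le, sig_ht hp]

lemma sig_hSpos (hp : p ∈ isoenergeticSurface (1/2 : ℝ)) : 0 < Real.sqrt (Tf p) := Real.sqrt_pos.2 (Tf_pos p)

lemma r2_sq : (Real.sqrt 2)^2 = 2 := Real.sq_sqrt (by norm_num)
lemma r3_sq : (Real.sqrt 3)^2 = 3 := Real.sq_sqrt (by norm_num)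
lemma r2_pos : (0:ℝ) < Real.sqrt 2 := Real.sqrt_pos.2 (by norm_num)
lemma r3_pos : (0:ℝ) < Real.sqrt 3 := Real.sqrt_pos.2 (by norm_num)

lemma sumsq_F (hp : p ∈ isoenergeticSurface (1/2 : ℝ)) :
    (Fmap p 0)^2 + (Fmap p 1)^2 + (Fmap p 2)^2 + (Fmap p 3)^2 = 1 := by
  have hI1 := sig_I1 hp
  have hI2 := sig_I2 hp
  have hI3 := sig_I3 hp
  have htpos := sig_tpos hp
  rw [Fmap0, Fmap1, Fmap2, Fmap3, sig_ht hp]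
  set a := p.1 0
  set b := p.1 1
  set c := p.1 2
  set d := p.2 0
  set e := p.2 1
  set f := p.2 2
  set S := Real.sqrt (1 - c) with hSdef
  have hS2 : S^2 = 1 - c := Real.sq_sqrt htpos.le
  have hSpos : 0 < S := Real.sqrt_pos.2 htpos
  have hSne : S ≠ 0 := ne_of_gt hSpos
  have h3ne : Real.sqrt 3 ≠ 0 := ne_of_gt r3_pos
  have h1cne : (1 - c) ≠ 0 := ne_of_gt htpos
  have hmain : 2*(a^2+b^2)*(1-c) + (d*(1-c) + a*f)^2 + (e*(1-c)+b*f)^2 = 3*(1-c)^2 := by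
    linear_combination (2*(1-c)+f^2)*hI1 + 2*(1-c)*f*hI2 + (1-c)^2*hI3
  have expand : (Real.sqrt 2*(Real.sqrt 3)⁻¹*S⁻¹*a)^2 + (Real.sqrt 2*(Real.sqrt 3)⁻¹*S⁻¹*b)^2
      + ((Real.sqrt 3)⁻¹*(d + a*f*(1-c)⁻¹))^2 + ((Real.sqrt 3)⁻¹*(e + b*f*(1-c)⁻¹))^2
      = (2*(a^2+b^2)*(1-c) + (d*(1-c) + a*f)^2 + (e*(1-c)+b*f)^2) / (3*(1-c)^2) := by
    simp only [mul_pow, inv_pow]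
    rw [r2_sq, r3_sq, hS2]
    field_simp
  rw [expand, hmain]
  field_simp

end SP

namespace SP

lemma Fmap_mapsTo : Set.MapsTo Fmap (isoenergeticSurface (1/2 : ℝ))
    (Metric.sphere (0 : E4) 1 : Set E4) := fun p hp =>
  mem_sphere_zero_iff_norm.2 (norm4_of (sumsq_F hp))

lemma sph_J1 {w : E4} (hw : w ∈ (Metric.sphere (0 : E4) 1 : Set E4)) :
    (w 0)^2 + (w 1)^2 + (w 2)^2 + (w 3)^2 = 1 :=
  sumsq4 (mem_sphere_zero_iff_norm.1 hw)

lemma sph_inner {w : E4} (hw : w ∈ (Metric.sphere (0 : E4) 1 : Set E4)) :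
    ⟪w, w⟫ = 1 := by
  rw [real_inner_self_eq_norm_sq, mem_sphere_zero_iff_norm.1 hw]; norm_num

lemma sph_hTg {w : E4} (hw : w ∈ (Metric.sphere (0 : E4) 1 : Set E4)) :
    Tg w = 2 - (3/2)*((w 0)^2 + (w 1)^2) := by
  unfold Tg
  rw [sph_inner hw]
  ring

lemma sph_hS2 {w : E4} (hw : w ∈ (Metric.sphere (0 : E4) 1 : Set E4)) :
    (Real.sqrt (Tg w))^2 = 2 - (3/2)*((w 0)^2 + (w 1)^2) := by
  rw [Real.sq_sqrt (Tg_pos w).le, sph_hTg hw]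

lemma Gmap_mapsTo : Set.MapsTo Gmap (Metric.sphere (0 : E4) 1 : Set E4)
    (isoenergeticSurface (1/2 : ℝ)) := by
  intro w hw
  refine ⟨⟨?_, ?_⟩, ?_⟩
  · apply norm3_of
    rw [Gmap10, Gmap11, Gmap12]
    simp only [mul_pow, inv_pow]
    rw [r3_sq, r2_sq, sph_hS2 hw]
    ring
  · show ⟪(Gmap w).1, (Gmap w).2⟫ = 0
    rw [inner3, Gmap10, Gmap11, Gmap12, Gmap20, Gmap21, Gmap22]
    unfold ug
    ring_nf
    simp only [r3_sq]
    ring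
  · show (1/2 : ℝ) * ⟪(Gmap w).2, (Gmap w).2⟫ + (Gmap w).1 2 = 1/2
    rw [inner_self3, Gmap20, Gmap21, Gmap22, Gmap12]
    unfold ug
    simp only [mul_pow, inv_pow]
    rw [r3_sq, r2_sq, sph_hS2 hw]
    linear_combination (3/2) * sph_J1 hw

end SP

namespace SP

variable {p : E3 × E3}

lemma hw01 (hp : p ∈ isoenergeticSurface (1/2 : ℝ)) :
    (Fmap p 0)^2 + (Fmap p 1)^2 = (2/3)*(1 + p.1 2) := by
  have hI1 := sig_I1 hp
  have htpos := sig_tpos hp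
  rw [Fmap0, Fmap1, sig_ht hp]
  have hS2 : (Real.sqrt (1 - p.1 2))^2 = 1 - p.1 2 := Real.sq_sqrt htpos.le
  simp only [mul_pow, inv_pow]
  rw [r2_sq, r3_sq, hS2]
  have h1cne : (1 - p.1 2) ≠ 0 := ne_of_gt htpos
  field_simp
  linear_combination hI1

lemma hTgF (hp : p ∈ isoenergeticSurface (1/2 : ℝ)) : Tg (Fmap p) = Tf p := by
  have hinner : ⟪Fmap p, Fmap p⟫ = 1 := by
    rw [real_inner_self_eq_norm_sq, norm4_of (sumsq_F hp)]; norm_num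
  unfold Tg
  rw [hinner, hw01 hp, sig_ht hp]
  ring

lemma hugF (hp : p ∈ isoenergeticSurface (1/2 : ℝ)) :
    ug (Fmap p) = Real.sqrt 2 * (Real.sqrt (1 - p.1 2))⁻¹ * p.2 2 / 3 := by
  have hI1 := sig_I1 hp
  have hI2 := sig_I2 hp
  have htpos := sig_tpos hp
  have hS2 : (Real.sqrt (1 - p.1 2))^2 = 1 - p.1 2 := Real.sq_sqrt htpos.le
  have hSne : Real.sqrt (1 - p.1 2) ≠ 0 := by positivity
  have h1cne : (1 - p.1 2) ≠ 0 := ne_of_gt htpos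
  have h3ne : Real.sqrt 3 ≠ 0 := ne_of_gt r3_pos
  have h2ne : Real.sqrt 2 ≠ 0 := ne_of_gt r2_pos
  unfold ug
  rw [Fmap2, Fmap0, Fmap3, Fmap1, sig_ht hp]
  field_simp
  linear_combination (3*(1-p.1 2))*hI2
    + (3*p.2 2)*hI1
    - (p.2 2*(1-p.1 2))*r3_sq

lemma gf_id (hp : p ∈ isoenergeticSurface (1/2 : ℝ)) : Gmap (Fmap p) = p := by
  have htpos := sig_tpos hp
  have hS2 : (Real.sqrt (1 - p.1 2))^2 = 1 - p.1 2 := Real.sq_sqrt htpos.le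
  have hSne : Real.sqrt (1 - p.1 2) ≠ 0 := by positivity
  have h1cne : (1 - p.1 2) ≠ 0 := ne_of_gt htpos
  have h3ne : Real.sqrt 3 ≠ 0 := ne_of_gt r3_pos
  have h2ne : Real.sqrt 2 ≠ 0 := ne_of_gt r2_pos
  have hTg2 : Real.sqrt (Tg (Fmap p)) = Real.sqrt (1 - p.1 2) := by
    rw [hTgF hp, sig_ht hp]
  refine Prod.ext ?_ ?_
  · ext i
    fin_cases i
    · show (Gmap (Fmap p)).1 0 = p.1 0
      rw [Gmap10, hTg2, Fmap0, sig_ht hp]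
      field_simp
    · show (Gmap (Fmap p)).1 1 = p.1 1
      rw [Gmap11, hTg2, Fmap1, sig_ht hp]
      field_simp
    · show (Gmap (Fmap p)).1 2 = p.1 2
      rw [Gmap12, hw01 hp]
      ring
  · ext i
    fin_cases i
    · show (Gmap (Fmap p)).2 0 = p.2 0
      rw [Gmap20, Fmap2, Fmap0, hugF hp, sig_ht hp]
      field_simp
      ring_nf
      simp only [r2_sq, r3_sq, hS2]
      ring
    · show (Gmap (Fmap p)).2 1 = p.2 1
      rw [Gmap21, Fmap3, Fmap1, hugF hp, sig_ht hp]
      field_simp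
      ring_nf
      simp only [r2_sq, r3_sq, hS2]
      ring
    · show (Gmap (Fmap p)).2 2 = p.2 2
      rw [Gmap22, hTg2, hugF hp]
      field_simp

end SP

namespace SP

variable {w : E4}

lemma hvvG (hw : w ∈ (Metric.sphere (0 : E4) 1 : Set E4)) :
    ⟪(Gmap w).2, (Gmap w).2⟫ = 3*((w 2)^2 + (w 3)^2) := by
  rw [inner_self3, Gmap20, Gmap21, Gmap22]
  unfold ug
  simp only [mul_pow, inv_pow]
  rw [r3_sq, r2_sq, sph_hS2 hw]
  ring

lemma hTfG (hw : w ∈ (Metric.sphere (0 : E4) 1 : Set E4)) :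
    Tf (Gmap w) = Tg w := by
  unfold Tf
  rw [hvvG hw, sph_hTg hw]
  linear_combination (3/2) * sph_J1 hw

lemma fg_id (hw : w ∈ (Metric.sphere (0 : E4) 1 : Set E4)) : Fmap (Gmap w) = w := by
  have hTgpos := Tg_pos w
  have hTgne : Tg w ≠ 0 := ne_of_gt hTgpos
  have hSg2 : (Real.sqrt (Tg w))^2 = Tg w := Real.sq_sqrt hTgpos.le
  have hSgne : Real.sqrt (Tg w) ≠ 0 := Real.sqrt_ne_zero'.2 hTgpos
  have h3ne : Real.sqrt 3 ≠ 0 := ne_of_gt r3_pos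
  have h2ne : Real.sqrt 2 ≠ 0 := ne_of_gt r2_pos
  have hsq : Real.sqrt (Tf (Gmap w)) = Real.sqrt (Tg w) := by rw [hTfG hw]
  ext i
  fin_cases i
  · show Fmap (Gmap w) 0 = w 0
    rw [Fmap0, hsq, Gmap10]
    field_simp
  · show Fmap (Gmap w) 1 = w 1
    rw [Fmap1, hsq, Gmap11]
    field_simp
  · show Fmap (Gmap w) 2 = w 2
    rw [Fmap2, hTfG hw, Gmap20, Gmap10, Gmap22]
    field_simp
    ring_nf
    simp only [r2_sq, r3_sq, hSg2]
    ring
  · show Fmap (Gmap w) 3 = w 3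
    rw [Fmap3, hTfG hw, Gmap21, Gmap11, Gmap22]
    field_simp
    ring_nf
    simp only [r2_sq, r3_sq, hSg2]
    ring

theorem part1_diffeo :
    SubmanifoldDiffeo (isoenergeticSurface (1/2 : ℝ))
      (Metric.sphere (0 : EuclideanSpace ℝ (Fin 4)) 1 : Set (EuclideanSpace ℝ (Fin 4))) :=
  ⟨Fmap, Gmap, Fmap_contDiff, Gmap_contDiff, Fmap_mapsTo, Gmap_mapsTo,
    fun _ hp => gf_id hp, fun _ hw => fg_id hw⟩

end SP

/-- For the spherical pendulum with Hamiltonian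
`E(x,v) = ½⟨v,v⟩ + x₃` on `TS²`, the isoenergetic surface `Q³ = {E = ½}` is
diffeomorphic to the 3-sphere `S³`, while for any `α > 1` the isoenergetic surface
`Q³ = {E = α}` is diffeomorphic to the unit tangent bundle
`T₁S² = {(x,ξ) : x ∈ S², ‖ξ‖ = 1}`, hence (being `T₁S²`) it is the real projective
space `ℝP³`. -/
theorem spherical_pendulum_isoenergetic_surfaces :
    SubmanifoldDiffeo (isoenergeticSurface (1 / 2))
      (Metric.sphere (0 : EuclideanSpace ℝ (Fin 4)) 1 : Set (EuclideanSpace ℝ (Fin 4))) ∧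
    (∀ α : ℝ, 1 < α →
      SubmanifoldDiffeo (isoenergeticSurface α) T1S2 ∧
      Nonempty (isoenergeticSurface α ≃ₜ RP3)) :=
  ⟨SP.part1_diffeo, fun _ hα => ⟨SP.part2_diffeo hα, ⟨SP.isoHomeoRP3 hα⟩⟩⟩

end
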